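/- arXiv:2604.01427 — 2 statements merged into one kernel-verified Lean document; each statement's English description precedes it below -/
import Mathlib

section
/- Let V₁ have signature (p₁, q₁) and V₂ signature (p₂, q₂), and g ∈ O(V₂). On the tensor product V₁ ⊗ V₂, which has signature (p₁p₂ + q₁q₂, p₁q₂ + q₁p₂), the orientation characters satisfy σ(id ⊗ g) = σ(g)^{p₁} τ(g)^{q₁} and τ(id ⊗ g) = τ(g)^{p₁} σ(g)^{q₁}. -/
open scoped Classical TensorProduct
open Finset

noncomputable section

variable {V : Type*} [AddCommGroup V] [Module ℝ V]

/-- `P` is a maximal positive-definite subspace for the bilinear form `B`. -/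
def IsMaxPos (B : LinearMap.BilinForm ℝ V) (P : Submodule ℝ V) : Prop :=
  (∀ v ∈ P, v ≠ 0 → 0 < B v v) ∧
    ∀ Q : Submodule ℝ V, (∀ v ∈ Q, v ≠ 0 → 0 < B v v) → P ≤ Q → Q = P

/-- `P` is a maximal negative-definite subspace for the bilinear form `B`. -/
def IsMaxNeg (B : LinearMap.BilinForm ℝ V) (P : Submodule ℝ V) : Prop :=
  (∀ v ∈ P, v ≠ 0 → B v v < 0) ∧
    ∀ Q : Submodule ℝ V, (∀ v ∈ Q, v ≠ 0 → B v v < 0) → P ≤ Q → Q = P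

/-- The determinant of the compression of `g` to the subspace `P`: the composite
`P → V → V → P` of the inclusion, `g`, and the `B`-orthogonal projection onto `P`. -/
def projDet (B : LinearMap.BilinForm ℝ V) (P : Submodule ℝ V) (g : V →ₗ[ℝ] V) : ℝ :=
  if h : IsCompl P (B.orthogonal P) then
    LinearMap.det ((P.linearProjOfIsCompl _ h).comp (g.comp P.subtype)) else 1

/-- The character `σ` of the orthogonal group of `B`: `σ(g) = -1` exactly when `g` reverses
the orientation of a maximal positive-definite subspace. -/
def sigmaChar (B : LinearMap.BilinForm ℝ V) (g : V →ₗ[ℝ] V) : ℝ :=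
  if ∃ P : Submodule ℝ V, IsMaxPos B P ∧ projDet B P g < 0 then -1 else 1

/-- The character `τ` of the orthogonal group of `B`: `τ(g) = -1` exactly when `g` reverses
the orientation of a maximal negative-definite subspace. -/
def tauChar (B : LinearMap.BilinForm ℝ V) (g : V →ₗ[ℝ] V) : ℝ :=
  if ∃ P : Submodule ℝ V, IsMaxNeg B P ∧ projDet B P g < 0 then -1 else 1

/-!
`σ(g)` is the sign of the determinant of the compression of `g` to any maximal positive
subspace `P`. This sign does not depend on `P`: another maximal positive subspace `P'` is the
graph of a map `f : P → P^⊥`, the graphs of `t • f` for `0 ≤ t ≤ 1` are all maximal positive,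
and for a basis `e` of `P` the sign of the compression determinant on the graph of `t • f` is
that of `det [B (eᵢ + t f eᵢ) (g (eⱼ + t f eⱼ))]`, a continuous and nowhere vanishing function
of `t`. With this description `σ` is multiplicative on orthogonal sums, unchanged when the form is scaled by a
positive constant, and turned into `τ = σ_{-B}` by a negative one. An orthogonal basis `b` of
`V₁` identifies `V₁ ⊗ V₂` isometrically with `⊕ᵢ (V₂, B₁(bᵢ, bᵢ) • B₂)`, carrying `id ⊗ g` to
`g ⊕ ⋯ ⊕ g`, so `σ(id ⊗ g)` is the product of `σ(g)` over the positive and `τ(g)` over the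
negative `B₁(bᵢ, bᵢ)`. Replacing `B₁` by `-B₁` gives `τ(id ⊗ g)`.
-/

open LinearMap (BilinForm)
open Module Submodule

def IsPosDefOn (B : BilinForm ℝ V) (P : Submodule ℝ V) : Prop :=
  ∀ v ∈ P, v ≠ 0 → 0 < B v v

section MaxPos

variable {B : BilinForm ℝ V} {P Q : Submodule ℝ V}

theorem isMaxPos_iff :
    IsMaxPos B P ↔ IsPosDefOn B P ∧ ∀ Q, IsPosDefOn B Q → P ≤ Q → Q = P :=
  Iff.rfl

theorem apply_add_self_of_apply_eq_zero (hs : ∀ x y, B x y = B y x) {a n : V}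
    (han : B a n = 0) : B (a + n) (a + n) = B a a + B n n := by
  simp [han, hs n a]

theorem IsPosDefOn.disjoint_orthogonal (hP : IsPosDefOn B P) :
    Disjoint P (B.orthogonal P) := by
  refine Submodule.disjoint_def.2 fun v hvP hvN => ?_
  by_contra hv
  exact (hP v hvP hv).ne' (hvN v hvP)

theorem IsPosDefOn.isCompl_orthogonal [FiniteDimensional ℝ V] (hs : ∀ x y, B x y = B y x)
    (hP : IsPosDefOn B P) : IsCompl P (B.orthogonal P) :=
  B.isCompl_orthogonal_of_restrict_nondegenerate (fun x y h => by rwa [hs])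
    (B.nondegenerate_restrict_of_disjoint_orthogonal (fun x y h => by rwa [hs])
      hP.disjoint_orthogonal)

theorem exists_isMaxPos [FiniteDimensional ℝ V] (B : BilinForm ℝ V) :
    ∃ P : Submodule ℝ V, IsMaxPos B P := by
  obtain ⟨P, hP, hmax⟩ := wellFounded_gt.has_min {Q : Submodule ℝ V | IsPosDefOn B Q}
    ⟨⊥, fun v hv hv0 => absurd ((Submodule.mem_bot ℝ).1 hv) hv0⟩
  exact ⟨P, hP, fun Q hQ hle => (hle.lt_or_eq.resolve_left (hmax Q hQ)).symm⟩

theorem IsMaxPos.apply_self_nonpos (hs : ∀ x y, B x y = B y x) (hP : IsMaxPos B P) {v : V}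
    (hv : v ∈ B.orthogonal P) : B v v ≤ 0 := by
  by_contra! hvv
  have hsup : IsPosDefOn B (P ⊔ span ℝ {v}) := by
    intro x hx hx0
    obtain ⟨p, hp, w, hw, rfl⟩ := mem_sup.1 hx
    obtain ⟨c, rfl⟩ := mem_span_singleton.1 hw
    have hpv : B p v = 0 := hv p hp
    rw [apply_add_self_of_apply_eq_zero hs (by simp [hpv])]
    simp only [map_smul, LinearMap.smul_apply, smul_eq_mul]
    rcases eq_or_ne p 0 with rfl | hp0
    · have hc : c ≠ 0 := by rintro rfl; simp at hx0
      simpa [mul_assoc] using mul_pos (mul_self_pos.2 hc) hvv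
    · nlinarith [hP.1 p hp hp0, mul_self_nonneg c]
  have hvP : v ∈ P := hP.2 _ hsup le_sup_left ▸ mem_sup_right (mem_span_singleton_self v)
  exact hvv.ne' (hv v hvP)

theorem injective_projectionOnto_comp_subtype (hc : IsCompl P (B.orthogonal P))
    (hN : ∀ v ∈ B.orthogonal P, B v v ≤ 0) (hQ : IsPosDefOn B Q) :
    Function.Injective (P.projectionOnto _ hc ∘ₗ Q.subtype) := by
  rw [← LinearMap.ker_eq_bot, eq_bot_iff]
  rintro ⟨x, hxQ⟩ hx
  have hxN : x ∈ B.orthogonal P := (projectionOnto_apply_eq_zero_iff hc).1 (LinearMap.mem_ker.1 hx)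
  by_contra hx0
  exact (hN x hxN).not_gt (hQ x hxQ fun h => hx0 (by simp [h]))

variable [FiniteDimensional ℝ V]

theorem finrank_le_of_apply_self_nonpos (hc : IsCompl P (B.orthogonal P))
    (hN : ∀ v ∈ B.orthogonal P, B v v ≤ 0) (hQ : IsPosDefOn B Q) :
    finrank ℝ Q ≤ finrank ℝ P :=
  LinearMap.finrank_le_finrank_of_injective (injective_projectionOnto_comp_subtype hc hN hQ)

theorem isMaxPos_of_apply_self_nonpos (hs : ∀ x y, B x y = B y x) (hP : IsPosDefOn B P)
    (hN : ∀ v ∈ B.orthogonal P, B v v ≤ 0) : IsMaxPos B P :=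
  ⟨hP, fun _ hQ hle => (eq_of_le_of_finrank_le hle
    (finrank_le_of_apply_self_nonpos (hP.isCompl_orthogonal hs) hN hQ)).symm⟩

theorem IsMaxPos.finrank_le (hs : ∀ x y, B x y = B y x) (hP : IsMaxPos B P)
    (hQ : IsPosDefOn B Q) : finrank ℝ Q ≤ finrank ℝ P :=
  finrank_le_of_apply_self_nonpos (IsPosDefOn.isCompl_orthogonal hs hP.1)
    (fun _ => hP.apply_self_nonpos hs) hQ

theorem IsMaxPos.of_finrank_eq (hs : ∀ x y, B x y = B y x) (hP : IsMaxPos B P)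
    (hQ : IsPosDefOn B Q) (h : finrank ℝ Q = finrank ℝ P) : IsMaxPos B Q :=
  ⟨hQ, fun _ hR hle => (eq_of_le_of_finrank_le hle (h ▸ hP.finrank_le hs hR)).symm⟩

end MaxPos

section ProjDet

variable {B : BilinForm ℝ V} {P : Submodule ℝ V} {g : V →ₗ[ℝ] V}

theorem projection_eq_of_sub_mem {N : Submodule ℝ V} (hc : IsCompl P N) {x a : V} (ha : a ∈ P)
    (hxa : x - a ∈ N) : P.projection N hc x = a := by
  rw [← add_sub_cancel a x, map_add, projection_apply_of_mem_left hc ha,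
    projection_apply_of_mem_right hc hxa, add_zero]

theorem projDet_of_isCompl (hc : IsCompl P (B.orthogonal P)) :
    projDet B P g = LinearMap.det (P.projectionOnto _ hc ∘ₗ g ∘ₗ P.subtype) := by
  rw [projDet, dif_pos hc]
  rfl

theorem projDet_eq_det_of_injective {W : Type*} [AddCommGroup W] [Module ℝ W]
    (hc : IsCompl P (B.orthogonal P)) {j : W →ₗ[ℝ] V} (hj : Function.Injective j)
    (hjP : LinearMap.range j = P) (c : W →ₗ[ℝ] W)
    (hcomp : ∀ w, g (j w) - j (c w) ∈ B.orthogonal P) : projDet B P g = LinearMap.det c := by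
  subst hjP
  let e := LinearEquiv.ofInjective j hj
  rw [projDet_of_isCompl hc, ← LinearMap.det_conj c e]
  congr 1
  ext x
  obtain ⟨w, rfl⟩ := e.surjective x
  simpa [e] using projection_eq_of_sub_mem hc (LinearMap.mem_range_self j (c w)) (hcomp w)

theorem IsMaxPos.projDet_ne_zero [FiniteDimensional ℝ V] (hs : ∀ x y, B x y = B y x)
    (hg : ∀ x y, B (g x) (g y) = B x y) (hP : IsMaxPos B P) : projDet B P g ≠ 0 := by
  have hc := IsPosDefOn.isCompl_orthogonal hs hP.1
  rw [projDet_of_isCompl hc]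
  refine fun h => (LinearMap.bot_lt_ker_of_det_eq_zero h).ne' (eq_bot_iff.2 ?_)
  rintro ⟨x, hx⟩ hx0
  have hgx : g x ∈ B.orthogonal P :=
    (projectionOnto_apply_eq_zero_iff hc).1 (LinearMap.mem_ker.1 hx0)
  have hxx := hP.apply_self_nonpos hs hgx
  rw [hg] at hxx
  by_contra hne
  exact hxx.not_gt (hP.1 x hx fun h => hne (by simp [h]))

end ProjDet

section PairingMatrix

variable {ι : Type*} [Fintype ι] [DecidableEq ι]

def pairingMatrix (B : BilinForm ℝ V) (g : V →ₗ[ℝ] V) (v : ι → V) : Matrix ι ι ℝ :=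
  Matrix.of fun i k => B (v i) (g (v k))

variable {B : BilinForm ℝ V} {P : Submodule ℝ V}

theorem det_pairingMatrix_eq (g : V →ₗ[ℝ] V) (hc : IsCompl P (B.orthogonal P))
    (e : Basis ι ℝ P) :
    (pairingMatrix B g fun i => (e i : V)).det =
      (pairingMatrix B LinearMap.id fun i => (e i : V)).det * projDet B P g := by
  set c := P.projectionOnto _ hc ∘ₗ g ∘ₗ P.subtype
  have hM : pairingMatrix B g (fun i => (e i : V)) =
      pairingMatrix B LinearMap.id (fun i => (e i : V)) * LinearMap.toMatrix e e c := by
    ext i k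
    have hk : g (e k) - (c (e k) : V) ∈ B.orthogonal P := sub_projection_mem hc _
    have hB : B (e i) (g (e k)) = B (e i) (c (e k)) := by
      rw [← sub_eq_zero, ← map_sub]; exact hk (e i) (e i).2
    conv_lhs => rw [pairingMatrix, Matrix.of_apply, hB, ← e.sum_repr (c (e k))]
    simp only [Submodule.coe_sum, Submodule.coe_smul, map_sum, map_smul, smul_eq_mul,
      Matrix.mul_apply, pairingMatrix, Matrix.of_apply, LinearMap.toMatrix_apply,
      LinearMap.id_apply, mul_comm]
  rw [hM, Matrix.det_mul, LinearMap.det_toMatrix, projDet_of_isCompl hc]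

theorem IsPosDefOn.det_pairingMatrix_id_pos (hs : ∀ x y, B x y = B y x) (hP : IsPosDefOn B P)
    (e : Basis ι ℝ P) : 0 < (pairingMatrix B LinearMap.id fun i => (e i : V)).det := by
  refine Matrix.PosDef.det_pos (Matrix.PosDef.of_dotProduct_mulVec_pos ?_ fun x hx => ?_)
  · ext i k
    simp [pairingMatrix, hs]
  · have hx' : ∑ i, x i • e i ≠ 0 := fun h =>
      hx (funext (Fintype.linearIndependent_iff.1 e.linearIndependent x h))
    have hpos := hP _ (∑ i, x i • e i).2 (by exact_mod_cast hx')
    have hsum : star x ⬝ᵥ (pairingMatrix B LinearMap.id fun i => (e i : V)).mulVec x =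
        B ↑(∑ i, x i • e i) ↑(∑ i, x i • e i) := by
      simp only [dotProduct, Matrix.mulVec, pairingMatrix, Matrix.of_apply, Submodule.coe_sum,
        Submodule.coe_smul, map_sum, map_smul, LinearMap.sum_apply, LinearMap.smul_apply,
        LinearMap.id_apply, smul_eq_mul, Finset.mul_sum, star_trivial]
      rw [Finset.sum_comm]
      exact Finset.sum_congr rfl fun _ _ => Finset.sum_congr rfl fun _ _ => by ring
    rwa [hsum]

theorem IsPosDefOn.projDet_pos_iff [FiniteDimensional ℝ V] (hs : ∀ x y, B x y = B y x)
    (hP : IsPosDefOn B P) (g : V →ₗ[ℝ] V) (e : Basis ι ℝ P) :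
    0 < projDet B P g ↔ 0 < (pairingMatrix B g fun i => (e i : V)).det := by
  rw [det_pairingMatrix_eq g (hP.isCompl_orthogonal hs) e,
    mul_pos_iff_of_pos_left (hP.det_pairingMatrix_id_pos hs e)]

theorem IsMaxPos.det_pairingMatrix_ne_zero [FiniteDimensional ℝ V] (hs : ∀ x y, B x y = B y x)
    {g : V →ₗ[ℝ] V} (hg : ∀ x y, B (g x) (g y) = B x y) (hP : IsMaxPos B P) (e : Basis ι ℝ P) :
    (pairingMatrix B g fun i => (e i : V)).det ≠ 0 := by
  rw [det_pairingMatrix_eq g (IsPosDefOn.isCompl_orthogonal hs hP.1) e]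
  exact mul_ne_zero (IsPosDefOn.det_pairingMatrix_id_pos hs hP.1 e).ne' (hP.projDet_ne_zero hs hg)

theorem continuous_det_pairingMatrix_add_smul (B : BilinForm ℝ V) (g : V →ₗ[ℝ] V)
    (a d : ι → V) : Continuous fun t : ℝ => (pairingMatrix B g fun i => a i + t • d i).det := by
  refine Continuous.matrix_det (continuous_pi fun i => continuous_pi fun k => ?_)
  simp only [pairingMatrix, Matrix.of_apply, map_add, map_smul, LinearMap.add_apply,
    LinearMap.smul_apply, smul_eq_mul]
  fun_prop

end PairingMatrix

section WellDefined

variable {B : BilinForm ℝ V} {P Q : Submodule ℝ V} {g : V →ₗ[ℝ] V}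

theorem pos_iff_pos_of_continuousOn_of_ne_zero {F : ℝ → ℝ} {a b : ℝ}
    (hF : ContinuousOn F (Set.uIcc a b)) (hF0 : ∀ t ∈ Set.uIcc a b, F t ≠ 0) :
    0 < F a ↔ 0 < F b := by
  by_contra hab
  have h0 : (0 : ℝ) ∈ Set.uIcc (F a) (F b) := by
    rcases lt_or_ge 0 (F a) with ha | ha
    · exact Set.mem_uIcc.2 (Or.inr ⟨not_lt.1 fun hb => hab (iff_of_true ha hb), ha.le⟩)
    · exact Set.mem_uIcc.2 (Or.inl ⟨ha, not_lt.1 fun hb =>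
        hab (iff_of_false (not_lt.2 ha) (not_lt.2 hb.le))⟩)
  obtain ⟨t, ht, hFt⟩ := intermediate_value_uIcc hF h0
  exact hF0 t ht hFt

theorem apply_add_smul_self_pos (hs : ∀ x y, B x y = B y x) {a n : V} (han : B a n = 0)
    (hn : B n n ≤ 0) (h : 0 < B (a + n) (a + n)) {t : ℝ} (ht : t ∈ Set.Icc (0 : ℝ) 1) :
    0 < B (a + t • n) (a + t • n) := by
  rw [apply_add_self_of_apply_eq_zero hs han] at h
  rw [apply_add_self_of_apply_eq_zero hs (by simp [han])]
  simp only [map_smul, LinearMap.smul_apply, smul_eq_mul]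
  have ht2 : t * t ≤ 1 := by nlinarith [ht.1, ht.2]
  nlinarith [mul_nonneg (sub_nonneg.2 ht2) (neg_nonneg.2 hn)]

theorem injective_subtype_add {N : Submodule ℝ V} (hd : Disjoint P N) {f : P →ₗ[ℝ] V}
    (hf : ∀ x, f x ∈ N) : Function.Injective (P.subtype + f) := by
  rw [← LinearMap.ker_eq_bot, eq_bot_iff]
  intro x hx
  have hx' : (x : V) = -f x := eq_neg_of_add_eq_zero_left (LinearMap.mem_ker.1 hx)
  have hxN : (x : V) ∈ N := hx' ▸ N.neg_mem (hf x)
  simpa using Submodule.disjoint_def.1 hd x x.2 hxN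

variable [FiniteDimensional ℝ V]

theorem IsMaxPos.exists_graph (hs : ∀ x y, B x y = B y x) (hP : IsMaxPos B P)
    (hQ : IsMaxPos B Q) :
    ∃ f : P →ₗ[ℝ] V, (∀ x, f x ∈ B.orthogonal P) ∧ LinearMap.range (P.subtype + f) = Q := by
  have hc := IsPosDefOn.isCompl_orthogonal hs hP.1
  let φ := LinearMap.linearEquivOfInjective (P.projectionOnto _ hc ∘ₗ Q.subtype)
    (injective_projectionOnto_comp_subtype hc (fun _ => hP.apply_self_nonpos hs) hQ.1)
    (le_antisymm (hP.finrank_le hs hQ.1) (hQ.finrank_le hs hP.1))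
  refine ⟨Q.subtype ∘ₗ φ.symm.toLinearMap - P.subtype, fun x => ?_, ?_⟩
  · have hx : P.projection _ hc (φ.symm x) = x := congrArg Subtype.val (φ.apply_symm_apply x)
    simpa [hx] using sub_projection_mem hc (φ.symm x : V)
  · rw [add_sub_cancel, LinearMap.range_comp_of_range_eq_top _ (LinearEquiv.range _),
      range_subtype]

theorem IsMaxPos.projDet_pos_iff (hs : ∀ x y, B x y = B y x)
    (hg : ∀ x y, B (g x) (g y) = B x y) (hP : IsMaxPos B P) (hQ : IsMaxPos B Q) :
    0 < projDet B P g ↔ 0 < projDet B Q g := by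
  obtain ⟨f, hfP, hfQ⟩ := hP.exists_graph hs hQ
  let j : ℝ → P →ₗ[ℝ] V := fun t => P.subtype + t • f
  have hj_inj : ∀ t, Function.Injective (j t) := fun t =>
    injective_subtype_add (IsPosDefOn.disjoint_orthogonal hP.1) fun x => smul_mem _ t (hfP x)
  have hj_max : ∀ t ∈ Set.Icc (0 : ℝ) 1, IsMaxPos B (LinearMap.range (j t)) := by
    refine fun t ht => hP.of_finrank_eq hs ?_ (LinearMap.finrank_range_of_inj (hj_inj t))
    rintro _ ⟨x, rfl⟩ hx
    have hx0 : x ≠ 0 := by rintro rfl; simp at hx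
    have hx1 : (P.subtype + f) x ≠ 0 := by simpa [j] using (map_ne_zero_iff _ (hj_inj 1)).2 hx0
    exact apply_add_smul_self_pos hs (hfP x x x.2) (hP.apply_self_nonpos hs (hfP x))
      (hQ.1 _ (hfQ ▸ LinearMap.mem_range_self _ x) hx1) ht
  let e := Module.finBasis ℝ P
  let F : ℝ → ℝ := fun t => (pairingMatrix B g fun i => j t (e i)).det
  have hF : ∀ t ∈ Set.Icc (0 : ℝ) 1,
      (0 < projDet B (LinearMap.range (j t)) g ↔ 0 < F t) ∧ F t ≠ 0 := fun t ht =>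
    ⟨IsPosDefOn.projDet_pos_iff hs (hj_max t ht).1 g (e.map (.ofInjective _ (hj_inj t))),
      (hj_max t ht).det_pairingMatrix_ne_zero hs hg (e.map (.ofInjective _ (hj_inj t)))⟩
  have hcont : Continuous F := by
    simpa [F, j] using continuous_det_pairingMatrix_add_smul B g (fun i => (e i : V))
      (fun i => f (e i))
  have h0 : LinearMap.range (j 0) = P := by simp [j]
  have h1 : LinearMap.range (j 1) = Q := by simpa [j] using hfQ
  have hI : Set.uIcc (0 : ℝ) 1 = Set.Icc 0 1 := Set.uIcc_of_le zero_le_one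
  calc 0 < projDet B P g ↔ 0 < F 0 := by simpa only [h0] using (hF 0 (hI ▸ Set.left_mem_uIcc)).1
    _ ↔ 0 < F 1 := pos_iff_pos_of_continuousOn_of_ne_zero hcont.continuousOn
      fun t ht => (hF t (hI ▸ ht)).2
    _ ↔ 0 < projDet B Q g := by simpa only [h1] using (hF 1 (hI ▸ Set.right_mem_uIcc)).1.symm

theorem sigmaChar_eq_sign (hs : ∀ x y, B x y = B y x) (hg : ∀ x y, B (g x) (g y) = B x y)
    (hP : IsMaxPos B P) : sigmaChar B g = SignType.sign (projDet B P g) := by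
  rcases (hP.projDet_ne_zero hs hg).lt_or_gt with hneg | hpos
  · rw [sigmaChar, if_pos ⟨P, hP, hneg⟩, sign_neg hneg, SignType.coe_neg_one]
  · rw [sigmaChar, if_neg, sign_pos hpos, SignType.coe_one]
    rintro ⟨Q, hQ, hQneg⟩
    exact hQneg.not_gt ((hP.projDet_pos_iff hs hg hQ).1 hpos)

end WellDefined

section Scaling

variable {B : BilinForm ℝ V} {P : Submodule ℝ V} {g : V →ₗ[ℝ] V} {c : ℝ}

theorem orthogonal_smul (hc : c ≠ 0) (P : Submodule ℝ V) :
    (c • B).orthogonal P = B.orthogonal P := by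
  ext v
  simp [LinearMap.BilinForm.mem_orthogonal_iff, hc]

theorem projDet_smul (hc : c ≠ 0) : projDet (c • B) P g = projDet B P g := by
  rw [projDet, projDet, orthogonal_smul hc]

theorem projDet_neg : projDet (-B) P g = projDet B P g := by
  rw [show -B = (-1 : ℝ) • B by ext; simp, projDet_smul (neg_ne_zero.2 one_ne_zero)]

theorem isPosDefOn_smul_iff (hc : 0 < c) : IsPosDefOn (c • B) P ↔ IsPosDefOn B P := by
  simp [IsPosDefOn, mul_pos_iff_of_pos_left hc]

theorem isMaxPos_smul_iff (hc : 0 < c) : IsMaxPos (c • B) P ↔ IsMaxPos B P := by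
  simp only [isMaxPos_iff, isPosDefOn_smul_iff hc]

theorem isMaxNeg_iff_isMaxPos_neg : IsMaxNeg B P ↔ IsMaxPos (-B) P := by
  simp only [IsMaxNeg, IsMaxPos, LinearMap.neg_apply, neg_pos]

theorem sigmaChar_smul_of_pos (hc : 0 < c) : sigmaChar (c • B) g = sigmaChar B g := by
  simp only [sigmaChar, isMaxPos_smul_iff hc, projDet_smul hc.ne']

theorem tauChar_eq_sigmaChar_neg : tauChar B g = sigmaChar (-B) g := by
  simp only [tauChar, sigmaChar, isMaxNeg_iff_isMaxPos_neg, projDet_neg]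

theorem sigmaChar_smul_of_neg (hc : c < 0) : sigmaChar (c • B) g = tauChar B g := by
  rw [tauChar_eq_sigmaChar_neg, ← sigmaChar_smul_of_pos (B := -B) (neg_pos.2 hc)]
  congr 1
  ext
  simp

end Scaling

section Isometry

variable {W : Type*} [AddCommGroup W] [Module ℝ W] (e : V ≃ₗ[ℝ] W)
  {BV : BilinForm ℝ V} {BW : BilinForm ℝ W} {gV : V →ₗ[ℝ] V} {gW : W →ₗ[ℝ] W}

theorem orthogonal_map_of_isometry (he : ∀ x y, BW (e x) (e y) = BV x y)
    (P : Submodule ℝ V) :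
    BW.orthogonal (P.map (e : V →ₗ[ℝ] W)) = (BV.orthogonal P).map (e : V →ₗ[ℝ] W) := by
  ext w
  obtain ⟨v, rfl⟩ := e.surjective w
  simp only [LinearMap.BilinForm.mem_orthogonal_iff, Submodule.mem_map_equiv,
    LinearEquiv.symm_apply_apply]
  rw [← e.toEquiv.forall_congr_right]
  simp [he]

theorem isPosDefOn_map_iff (he : ∀ x y, BW (e x) (e y) = BV x y) {P : Submodule ℝ V} :
    IsPosDefOn BW (P.map (e : V →ₗ[ℝ] W)) ↔ IsPosDefOn BV P := by
  simp only [IsPosDefOn, Submodule.mem_map_equiv]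
  rw [← e.toEquiv.forall_congr_right]
  simp [he]

theorem isMaxPos_map_iff (he : ∀ x y, BW (e x) (e y) = BV x y) {P : Submodule ℝ V} :
    IsMaxPos BW (P.map (e : V →ₗ[ℝ] W)) ↔ IsMaxPos BV P := by
  rw [isMaxPos_iff, isMaxPos_iff, isPosDefOn_map_iff e he,
    ← (Submodule.orderIsoMapComap e).toEquiv.forall_congr_right]
  simp [isPosDefOn_map_iff e he, Submodule.map_le_map_iff_of_injective e.injective,
    (Submodule.map_injective_of_injective e.injective).eq_iff]

theorem projDet_map (he : ∀ x y, BW (e x) (e y) = BV x y) (hg : ∀ v, gW (e v) = e (gV v))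
    (P : Submodule ℝ V) : projDet BW (P.map (e : V →ₗ[ℝ] W)) gW = projDet BV P gV := by
  by_cases hc : IsCompl P (BV.orthogonal P)
  · have hc' : IsCompl (P.map (e : V →ₗ[ℝ] W)) (BW.orthogonal (P.map (e : V →ₗ[ℝ] W))) := by
      rw [orthogonal_map_of_isometry e he]
      exact (Submodule.orderIsoMapComap e).isCompl hc
    rw [projDet_of_isCompl hc]
    refine projDet_eq_det_of_injective hc' (j := (e : V →ₗ[ℝ] W) ∘ₗ P.subtype)
      (e.injective.comp Subtype.val_injective) (by rw [LinearMap.range_comp, range_subtype])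
      _ fun x => ?_
    rw [orthogonal_map_of_isometry e he]
    simpa [hg] using mem_map_of_mem (f := (e : V →ₗ[ℝ] W)) (sub_projection_mem hc (gV x))
  · have hc' : ¬ IsCompl (P.map (e : V →ₗ[ℝ] W)) (BW.orthogonal (P.map (e : V →ₗ[ℝ] W))) := by
      rw [orthogonal_map_of_isometry e he]
      exact fun h => hc ((Submodule.orderIsoMapComap e).isCompl_iff.2 h)
    rw [projDet, projDet, dif_neg hc, dif_neg hc']

theorem sigmaChar_congr (he : ∀ x y, BW (e x) (e y) = BV x y)
    (hg : ∀ v, gW (e v) = e (gV v)) : sigmaChar BW gW = sigmaChar BV gV := by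
  simp only [sigmaChar]
  congr 1
  exact propext ((Submodule.orderIsoMapComap e).toEquiv.exists_congr fun P => by
    simp [isMaxPos_map_iff e he, projDet_map e he hg]).symm

end Isometry

section Prod

variable {W : Type*} [AddCommGroup W] [Module ℝ W]

def prodForm (B : BilinForm ℝ V) (C : BilinForm ℝ W) : BilinForm ℝ (V × W) :=
  B.compl₁₂ (LinearMap.fst ℝ V W) (LinearMap.fst ℝ V W) +
    C.compl₁₂ (LinearMap.snd ℝ V W) (LinearMap.snd ℝ V W)

variable {B : BilinForm ℝ V} {C : BilinForm ℝ W} {P : Submodule ℝ V} {Q : Submodule ℝ W}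
  {gV : V →ₗ[ℝ] V} {gW : W →ₗ[ℝ] W}

@[simp]
theorem prodForm_apply (x y : V × W) : prodForm B C x y = B x.1 y.1 + C x.2 y.2 := rfl

theorem orthogonal_prodForm :
    (prodForm B C).orthogonal (P.prod Q) = (B.orthogonal P).prod (C.orthogonal Q) := by
  ext ⟨v, w⟩
  simp only [LinearMap.BilinForm.mem_orthogonal_iff, mem_prod, Prod.forall, prodForm_apply]
  constructor
  · intro h
    exact ⟨fun p hp => by simpa using h p 0 ⟨hp, Q.zero_mem⟩,
      fun q hq => by simpa using h 0 q ⟨P.zero_mem, hq⟩⟩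
  · rintro ⟨hv, hw⟩ p q ⟨hp, hq⟩
    rw [hv p hp, hw q hq, add_zero]

theorem IsPosDefOn.nonneg (hP : IsPosDefOn B P) {v : V} (hv : v ∈ P) : 0 ≤ B v v := by
  rcases eq_or_ne v 0 with rfl | hv0
  · simp
  · exact (hP v hv hv0).le

theorem IsPosDefOn.prod (hP : IsPosDefOn B P) (hQ : IsPosDefOn C Q) :
    IsPosDefOn (prodForm B C) (P.prod Q) := by
  rintro ⟨v, w⟩ ⟨hv, hw⟩ hvw
  rcases eq_or_ne v 0 with rfl | hv0
  · simpa using hQ w hw fun h => hvw (by simp [h])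
  · simpa using add_pos_of_pos_of_nonneg (hP v hv hv0) (hQ.nonneg hw)

variable [FiniteDimensional ℝ V] [FiniteDimensional ℝ W]

theorem IsMaxPos.prod (hsB : ∀ x y, B x y = B y x) (hsC : ∀ x y, C x y = C y x)
    (hP : IsMaxPos B P) (hQ : IsMaxPos C Q) : IsMaxPos (prodForm B C) (P.prod Q) := by
  refine isMaxPos_of_apply_self_nonpos (fun x y => by simp [hsB, hsC])
    (IsPosDefOn.prod hP.1 hQ.1) fun x hx => ?_
  rw [orthogonal_prodForm] at hx
  simpa using add_nonpos (hP.apply_self_nonpos hsB hx.1) (hQ.apply_self_nonpos hsC hx.2)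

theorem projDet_prodForm (hsB : ∀ x y, B x y = B y x) (hsC : ∀ x y, C x y = C y x)
    (hP : IsPosDefOn B P) (hQ : IsPosDefOn C Q) :
    projDet (prodForm B C) (P.prod Q) (gV.prodMap gW) = projDet B P gV * projDet C Q gW := by
  have hcP := hP.isCompl_orthogonal hsB
  have hcQ := hQ.isCompl_orthogonal hsC
  rw [projDet_of_isCompl hcP, projDet_of_isCompl hcQ, ← LinearMap.det_prodMap]
  refine projDet_eq_det_of_injective ((hP.prod hQ).isCompl_orthogonal fun x y => by
      simp [hsB, hsC]) (j := P.subtype.prodMap Q.subtype)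
    (Subtype.val_injective.prodMap Subtype.val_injective)
    (by rw [LinearMap.range_prodMap, range_subtype, range_subtype]) _ fun x => ?_
  rw [orthogonal_prodForm]
  exact ⟨sub_projection_mem hcP (gV x.1), sub_projection_mem hcQ (gW x.2)⟩

theorem sigmaChar_prodForm (hsB : ∀ x y, B x y = B y x) (hsC : ∀ x y, C x y = C y x)
    (hgV : ∀ x y, B (gV x) (gV y) = B x y) (hgW : ∀ x y, C (gW x) (gW y) = C x y) :
    sigmaChar (prodForm B C) (gV.prodMap gW) = sigmaChar B gV * sigmaChar C gW := by
  obtain ⟨P, hP⟩ := exists_isMaxPos B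
  obtain ⟨Q, hQ⟩ := exists_isMaxPos C
  rw [sigmaChar_eq_sign hsB hgV hP, sigmaChar_eq_sign hsC hgW hQ,
    sigmaChar_eq_sign (fun x y => by simp [hsB, hsC]) (fun x y => by simp [hgV, hgW])
      (hP.prod hsB hsC hQ), projDet_prodForm hsB hsC hP.1 hQ.1, sign_mul, SignType.coe_mul]

end Prod

section Pi

def piForm {ι : Type*} [Fintype ι] (Bs : ι → BilinForm ℝ V) : BilinForm ℝ (ι → V) :=
  ∑ i, (Bs i).compl₁₂ (LinearMap.proj i) (LinearMap.proj i)

@[simp]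
theorem piForm_apply {ι : Type*} [Fintype ι] (Bs : ι → BilinForm ℝ V) (u v : ι → V) :
    piForm Bs u v = ∑ i, Bs i (u i) (v i) := by
  simp [piForm]

theorem sigmaChar_of_subsingleton [Subsingleton V] (B : BilinForm ℝ V) (g : V →ₗ[ℝ] V) :
    sigmaChar B g = 1 := by
  rw [sigmaChar, if_neg]
  rintro ⟨P, -, hP⟩
  have h1 : projDet B P g = 1 := by
    unfold projDet
    split_ifs
    exacts [LinearMap.det_eq_one_of_subsingleton _, rfl]
  linarith

theorem sigmaChar_piForm [FiniteDimensional ℝ V] {g : V →ₗ[ℝ] V} :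
    ∀ {n : ℕ} (Bs : Fin n → BilinForm ℝ V), (∀ i x y, Bs i x y = Bs i y x) →
      (∀ i x y, Bs i (g x) (g y) = Bs i x y) →
      sigmaChar (piForm Bs) (LinearMap.piMap fun _ => g) = ∏ i, sigmaChar (Bs i) g
  | 0, _, _, _ => by simp [sigmaChar_of_subsingleton]
  | n + 1, Bs, hs, hg => by
    rw [Fin.prod_univ_succ, ← sigmaChar_piForm (fun i => Bs i.succ) (fun i => hs i.succ)
      (fun i => hg i.succ), ← sigmaChar_prodForm (hs 0)
      (fun u v => by simp only [piForm_apply, hs]) (hg 0) (fun u v => by simp [hg])]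
    refine sigmaChar_congr (Fin.consLinearEquiv ℝ fun _ => V)
      (fun x y => by simp [Fin.sum_univ_succ]) fun x => ?_
    ext i
    cases i using Fin.cases <;> simp

end Pi

section Tensor

variable {V₁ V₂ : Type*} [AddCommGroup V₁] [Module ℝ V₁] [AddCommGroup V₂] [Module ℝ V₂]
  {n : ℕ} {B₁ : BilinForm ℝ V₁} {B₂ : BilinForm ℝ V₂}

theorem apply_eq_sum_of_orthogonal_basis {ι : Type*} [Fintype ι] (b : Basis ι ℝ V₁)
    (horth : ∀ i j, i ≠ j → B₁ (b i) (b j) = 0) (x y : V₁) :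
    B₁ x y = ∑ i, b.repr x i * b.repr y i * B₁ (b i) (b i) := by
  conv_lhs => rw [← b.sum_repr x, ← b.sum_repr y]
  simp only [map_sum, map_smul, LinearMap.sum_apply, LinearMap.smul_apply, smul_eq_mul]
  refine Finset.sum_congr rfl fun i _ => ?_
  rw [Finset.sum_eq_single i (fun j _ hji => by rw [horth j i hji]; ring) (by simp)]
  ring

def tensorEquivPi (b : Basis (Fin n) ℝ V₁) : V₁ ⊗[ℝ] V₂ ≃ₗ[ℝ] (Fin n → V₂) :=
  (TensorProduct.equivFinsuppOfBasisLeft b).trans (Finsupp.linearEquivFunOnFinite ℝ V₂ (Fin n))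

@[simp]
theorem tensorEquivPi_tmul (b : Basis (Fin n) ℝ V₁) (x : V₁) (y : V₂) :
    tensorEquivPi b (x ⊗ₜ y) = fun i => b.repr x i • y := by
  ext i
  simp [tensorEquivPi]

theorem piForm_tensorEquivPi (b : Basis (Fin n) ℝ V₁)
    (horth : ∀ i j, i ≠ j → B₁ (b i) (b j) = 0) (z w : V₁ ⊗[ℝ] V₂) :
    piForm (fun i => B₁ (b i) (b i) • B₂) (tensorEquivPi b z) (tensorEquivPi b w) =
      B₁.tmul B₂ z w := by
  let e := (tensorEquivPi (V₂ := V₂) b).toLinearMap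
  suffices h : (piForm fun i => B₁ (b i) (b i) • B₂).compl₁₂ e e = B₁.tmul B₂ from
    LinearMap.congr_fun₂ h z w
  refine TensorProduct.ext' fun x y => TensorProduct.ext' fun x' y' => ?_
  simp only [LinearMap.compl₁₂_apply, piForm_apply, e, LinearEquiv.coe_coe, tensorEquivPi_tmul,
    LinearMap.smul_apply, map_smul, smul_eq_mul, LinearMap.BilinForm.tensorDistrib_tmul,
    apply_eq_sum_of_orthogonal_basis b horth x x', Finset.mul_sum]
  exact Finset.sum_congr rfl fun _ _ => by ring

theorem sigmaChar_tmul_eq_prod [FiniteDimensional ℝ V₂] (hs : ∀ x y, B₂ x y = B₂ y x)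
    {g : V₂ →ₗ[ℝ] V₂} (hg : ∀ x y, B₂ (g x) (g y) = B₂ x y) (b : Basis (Fin n) ℝ V₁)
    (horth : ∀ i j, i ≠ j → B₁ (b i) (b j) = 0) (hbnd : ∀ i, B₁ (b i) (b i) ≠ 0) :
    sigmaChar (B₁.tmul B₂) (LinearMap.lTensor V₁ g) =
      ∏ i, if 0 < B₁ (b i) (b i) then sigmaChar B₂ g else tauChar B₂ g := by
  rw [← sigmaChar_congr (tensorEquivPi b) (piForm_tensorEquivPi b horth)
    (gV := LinearMap.lTensor V₁ g) (gW := LinearMap.piMap fun _ => g) fun z => ?_,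
    sigmaChar_piForm _ (fun i x y => by simp [hs x y]) (fun i x y => by simp [hg])]
  · refine Finset.prod_congr rfl fun i _ => ?_
    split_ifs with hi
    · exact sigmaChar_smul_of_pos hi
    · exact sigmaChar_smul_of_neg ((not_lt.1 hi).lt_of_ne (hbnd i))
  · have h : (LinearMap.piMap fun _ => g) ∘ₗ (tensorEquivPi (V₂ := V₂) b).toLinearMap =
        (tensorEquivPi b).toLinearMap ∘ₗ LinearMap.lTensor V₁ g :=
      TensorProduct.ext' fun x y => by ext i; simp
    exact LinearMap.congr_fun h z

end Tensor

theorem prod_ite_pos_eq_pow_mul_pow {ι R : Type*} [Fintype ι] [CommMonoid R] (c : ι → ℝ)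
    (hc : ∀ i, c i ≠ 0) (x y : R) :
    ∏ i, (if 0 < c i then x else y) = x ^ #{i | 0 < c i} * y ^ #{i | c i < 0} := by
  rw [Finset.prod_ite, Finset.prod_const, Finset.prod_const]
  congr 3
  exact Finset.filter_congr fun i _ => ⟨fun h => (not_lt.1 h).lt_of_ne (hc i), fun h => h.not_gt⟩

theorem stmt_16_general {V₁ V₂ : Type*} [AddCommGroup V₁] [Module ℝ V₁]
    [AddCommGroup V₂] [Module ℝ V₂] [FiniteDimensional ℝ V₂]
    (B₁ : LinearMap.BilinForm ℝ V₁) (B₂ : LinearMap.BilinForm ℝ V₂)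
    (h₂symm : ∀ x y, B₂ x y = B₂ y x)
    (n₁ p₁ q₁ : ℕ) (b : Module.Basis (Fin n₁) ℝ V₁)
    (horth : ∀ i j, i ≠ j → B₁ (b i) (b j) = 0)
    (hbnd : ∀ i, B₁ (b i) (b i) ≠ 0)
    (hp₁ : p₁ = (univ.filter fun i : Fin n₁ => 0 < B₁ (b i) (b i)).card)
    (hq₁ : q₁ = (univ.filter fun i : Fin n₁ => B₁ (b i) (b i) < 0).card)
    (g : V₂ →ₗ[ℝ] V₂)
    (hgiso : ∀ x y, B₂ (g x) (g y) = B₂ x y) :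
    sigmaChar (B₁.tmul B₂) (LinearMap.lTensor V₁ g)
        = sigmaChar B₂ g ^ p₁ * tauChar B₂ g ^ q₁ ∧
    tauChar (B₁.tmul B₂) (LinearMap.lTensor V₁ g)
        = tauChar B₂ g ^ p₁ * sigmaChar B₂ g ^ q₁ := by
  have hneg : -B₁.tmul B₂ = (-B₁).tmul B₂ := by
    refine TensorProduct.ext' fun x y => TensorProduct.ext' fun x' y' => ?_
    simp
  constructor
  · rw [sigmaChar_tmul_eq_prod h₂symm hgiso b horth hbnd, prod_ite_pos_eq_pow_mul_pow _ hbnd,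
      hp₁, hq₁]
  · rw [tauChar_eq_sigmaChar_neg, hneg,
      sigmaChar_tmul_eq_prod h₂symm hgiso b (by simpa using horth) (by simpa using hbnd),
      prod_ite_pos_eq_pow_mul_pow _ (by simpa using hbnd), hp₁, hq₁, mul_comm]
    simp

/-- For an orthogonal map `g ∈ O(V₂)` and inner product spaces `V₁`, `V₂` of signatures
`(p₁, q₁)`, `(p₂, q₂)`, the map `id ⊗ g` on `V₁ ⊗ V₂` (with the tensor product form, of
signature `(p₁p₂ + q₁q₂, p₁q₂ + q₁p₂)`) satisfies `σ(id ⊗ g) = σ(g)^{p₁} τ(g)^{q₁}` and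
`τ(id ⊗ g) = τ(g)^{p₁} σ(g)^{q₁}`.  The signature of `B₁` is encoded by an orthogonal
basis with `p₁` vectors of positive square and `q₁` of negative square. -/
theorem stmt_16 {V₁ V₂ : Type*} [AddCommGroup V₁] [Module ℝ V₁] [FiniteDimensional ℝ V₁]
    [AddCommGroup V₂] [Module ℝ V₂] [FiniteDimensional ℝ V₂]
    (B₁ : LinearMap.BilinForm ℝ V₁) (B₂ : LinearMap.BilinForm ℝ V₂)
    (h₁symm : ∀ x y, B₁ x y = B₁ y x) (h₂symm : ∀ x y, B₂ x y = B₂ y x)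
    (h₂nd : B₂.Nondegenerate)
    (n₁ p₁ q₁ : ℕ) (b : Module.Basis (Fin n₁) ℝ V₁)
    (horth : ∀ i j, i ≠ j → B₁ (b i) (b j) = 0)
    (hbnd : ∀ i, B₁ (b i) (b i) ≠ 0)
    (hp₁ : p₁ = (univ.filter fun i : Fin n₁ => 0 < B₁ (b i) (b i)).card)
    (hq₁ : q₁ = (univ.filter fun i : Fin n₁ => B₁ (b i) (b i) < 0).card)
    (g : V₂ →ₗ[ℝ] V₂) (hg : Function.Bijective g)
    (hgiso : ∀ x y, B₂ (g x) (g y) = B₂ x y) :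
    sigmaChar (B₁.tmul B₂) (LinearMap.lTensor V₁ g)
        = sigmaChar B₂ g ^ p₁ * tauChar B₂ g ^ q₁ ∧
    tauChar (B₁.tmul B₂) (LinearMap.lTensor V₁ g)
        = tauChar B₂ g ^ p₁ * sigmaChar B₂ g ^ q₁ :=
  stmt_16_general B₁ B₂ h₂symm n₁ p₁ q₁ b horth hbnd hp₁ hq₁ g hgiso

end
end

section
/- Every nondegenerate skew-Hermitian form on a finite-dimensional quaternionic (right) vector space H^n is equivalent to any other: any two nondegenerate skew-Hermitian forms on H^n are related by an invertible quaternionic-linear change of basis. -/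
/-!
A nonzero pure quaternion `q` is congruent to `i`, i.e. `star a * q * a = i` for some `a`: conjugate
`q / ‖q‖` to `i` and rescale `a` by a real number. For a skew-Hermitian form every value `φ x x` is
pure, and by polarization (using that `φ x (y i) = φ x y * i`) a skew-Hermitian form vanishing on the
diagonal of a subspace vanishes on the whole subspace. So, by nondegeneracy, the orthogonal
complement of an orthonormal family `φ (e i) (e j) = δᵢⱼ i` of fewer than `n` vectors contains a
vector `w` with `φ w w ≠ 0`, which can be rescaled so that `φ w w = i`. This Gram–Schmidt process
yields a basis of this shape for every nondegenerate skew-Hermitian form, and the linear map sending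
such a basis for `ψ` to one for `φ` carries `ψ` to `φ`.
-/

open Quaternion MulOpposite

namespace Quaternion

@[simps] def unitI : ℍ[ℝ] := ⟨0, 1, 0, 0⟩
@[simps] def unitJ : ℍ[ℝ] := ⟨0, 0, 1, 0⟩

theorem unitI_mul_self : unitI * unitI = -1 := by
  ext <;> simp

theorem unitI_ne_zero : unitI ≠ 0 := by
  simp [Quaternion.ext_iff]

theorem exists_star_mul_mul_eq_unitI_of_smul {q b : ℍ[ℝ]} {s : ℝ} (hs : 0 < s)
    (hb : star b * q * b = s • unitI) : ∃ a : ℍ[ℝ], star a * q * a = unitI := by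
  refine ⟨(√s)⁻¹ • b, ?_⟩
  have hs' : (√s)⁻¹ * ((√s)⁻¹ * s) = 1 := by
    rw [← mul_assoc, ← mul_inv, Real.mul_self_sqrt hs.le, inv_mul_cancel₀ hs.ne']
  simp only [star_smul, smul_mul_assoc, mul_smul_comm, hb, smul_smul, hs', one_smul]

theorem exists_star_mul_mul_eq_unitI {q : ℍ[ℝ]} (hq : q.re = 0) (h0 : q ≠ 0) :
    ∃ a : ℍ[ℝ], star a * q * a = unitI := by
  set r := ‖q‖
  have hr : 0 < r := norm_pos_iff.2 h0
  have hqq : q * q = (r * r) • (-1 : ℍ[ℝ]) := by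
    rw [← sq, sq_eq_neg_normSq.2 hq, normSq_eq_norm_mul_self, smul_neg, ← coe_mul_eq_smul, mul_one]
  by_cases hu : r • unitI + q = 0
  · refine exists_star_mul_mul_eq_unitI_of_smul hr (b := unitJ) ?_
    rw [eq_neg_of_add_eq_zero_right hu]
    ext <;> simp
  · -- `q` and `r • unitI` are both square roots of `-r²`, so `u` intertwines them
    set u := r • unitI + q
    have hqu : q * u = u * (r • unitI) := by
      simp only [u, mul_add, add_mul, hqq, mul_smul_comm, smul_mul_assoc, unitI_mul_self]
      module
    have hu' : 0 < normSq u := normSq_nonneg.lt_of_ne (normSq_ne_zero.2 hu).symm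
    refine exists_star_mul_mul_eq_unitI_of_smul (mul_pos hu' hr) (b := u) ?_
    rw [mul_assoc, hqu, ← mul_assoc, star_mul_self, coe_mul_eq_smul, smul_smul]

theorem eq_zero_of_star_eq_self_of_star_mul_unitI {z : ℍ[ℝ]} (hz : star z = z)
    (hzi : star (z * unitI) = z * unitI) : z = 0 := by
  simp [Quaternion.ext_iff] at hz hzi
  ext <;> simp <;> linarith

end Quaternion

instance MulOpposite.moduleFinite_self (R : Type*) [Semiring R] : Module.Finite Rᵐᵒᵖ R :=
  ⟨⟨{1}, eq_top_iff.2 fun x _ => by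
    simpa using Submodule.smul_mem _ (op x)
      (Submodule.subset_span (Finset.mem_singleton_self (1 : R)))⟩⟩

structure IsSkewHermitianForm {V : Type*} [AddCommGroup V] [Module ℍ[ℝ]ᵐᵒᵖ V]
    (φ : V → V → ℍ[ℝ]) : Prop where
  add_left : ∀ x x' y, φ (x + x') y = φ x y + φ x' y
  add_right : ∀ x y y', φ x (y + y') = φ x y + φ x y'
  smul_left : ∀ (a : ℍ[ℝ]) x y, φ (op a • x) y = star a * φ x y
  smul_right : ∀ (a : ℍ[ℝ]) x y, φ x (op a • y) = φ x y * a
  skew : ∀ x y, φ y x = -star (φ x y)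

namespace IsSkewHermitianForm

variable {V : Type*} [AddCommGroup V] [Module ℍ[ℝ]ᵐᵒᵖ V] {φ : V → V → ℍ[ℝ]}

def rightLinear (hφ : IsSkewHermitianForm φ) (x : V) : V →ₗ[ℍ[ℝ]ᵐᵒᵖ] ℍ[ℝ] where
  toFun := φ x
  map_add' := hφ.add_right x
  map_smul' a y := hφ.smul_right (unop a) x y

@[simp] theorem rightLinear_apply (hφ : IsSkewHermitianForm φ) (x y : V) :
    hφ.rightLinear x y = φ x y :=
  rfl

theorem apply_eq_zero_comm (hφ : IsSkewHermitianForm φ) {x y : V} : φ x y = 0 ↔ φ y x = 0 := by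
  rw [hφ.skew, neg_eq_zero, star_eq_zero]

theorem re_apply_self (hφ : IsSkewHermitianForm φ) (x : V) : (φ x x).re = 0 :=
  star_eq_neg.1 (neg_eq_iff_eq_neg.1 (hφ.skew x x).symm)

theorem apply_eq_zero_of_apply_self_eq_zero (hφ : IsSkewHermitianForm φ)
    {W : Submodule ℍ[ℝ]ᵐᵒᵖ V} (hW : ∀ w ∈ W, φ w w = 0) {w w' : V} (hw : w ∈ W) (hw' : w' ∈ W) :
    φ w w' = 0 := by
  -- polarization makes `φ w w'` real on `W`; as `φ w (w' i) = φ w w' * i` is real too, it vanishes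
  have real : ∀ {w'}, w' ∈ W → star (φ w w') = φ w w' := by
    intro w' hw'
    have h := hW _ (W.add_mem hw hw')
    rw [hφ.add_left, hφ.add_right, hφ.add_right, hW w hw, hW w' hw', hφ.skew w w', zero_add,
      add_zero, ← sub_eq_add_neg, sub_eq_zero] at h
    exact h.symm
  refine eq_zero_of_star_eq_self_of_star_mul_unitI (real hw') ?_
  rw [← hφ.smul_right]
  exact real (W.smul_mem _ hw')

variable {ι : Type*}

variable (φ) in
def IsOrthonormal [DecidableEq ι] (e : ι → V) : Prop :=
  ∀ i j, φ (e i) (e j) = if i = j then unitI else 0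

noncomputable def orthogonal (hφ : IsSkewHermitianForm φ) (e : ι → V) : Submodule ℍ[ℝ]ᵐᵒᵖ V :=
  ⨅ j, LinearMap.ker (hφ.rightLinear (e j))

theorem mem_orthogonal (hφ : IsSkewHermitianForm φ) {e : ι → V} {y : V} :
    y ∈ hφ.orthogonal e ↔ ∀ j, φ (e j) y = 0 := by
  simp [orthogonal]

theorem IsOrthonormal.apply_sum_smul [Fintype ι] [DecidableEq ι] (hφ : IsSkewHermitianForm φ)
    {e : ι → V} (he : IsOrthonormal φ e) (c : ι → ℍ[ℝ]) (l : ι) :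
    φ (e l) (∑ j, op (c j) • e j) = unitI * c l := by
  rw [← rightLinear_apply hφ, map_sum]
  simp only [map_smul, rightLinear_apply, he l, op_smul_eq_mul, ite_mul, zero_mul,
    Finset.sum_ite_eq, Finset.mem_univ, if_true]

theorem IsOrthonormal.linearIndependent [Fintype ι] [DecidableEq ι] (hφ : IsSkewHermitianForm φ)
    {e : ι → V} (he : IsOrthonormal φ e) : LinearIndependent ℍ[ℝ]ᵐᵒᵖ e := by
  refine Fintype.linearIndependent_iff.2 fun g hg j => ?_
  have h : unitI * unop (g j) = 0 := by
    rw [← he.apply_sum_smul hφ (fun i => unop (g i)) j]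
    exact (congrArg (φ (e j)) hg).trans (map_zero (hφ.rightLinear (e j)))
  exact (unop_eq_zero_iff _).1 ((mul_eq_zero.1 h).resolve_left unitI_ne_zero)

theorem sub_sum_mem_orthogonal [Fintype ι] [DecidableEq ι] (hφ : IsSkewHermitianForm φ) {e : ι → V}
    (he : IsOrthonormal φ e) (v : V) :
    v - ∑ j, op (-unitI * φ (e j) v) • e j ∈ hφ.orthogonal e := by
  refine hφ.mem_orthogonal.2 fun l => ?_
  rw [← rightLinear_apply hφ, map_sub, rightLinear_apply, rightLinear_apply, he.apply_sum_smul hφ,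
    ← mul_assoc, mul_neg, unitI_mul_self, neg_neg, one_mul, sub_self]

theorem orthogonal_sup_span_eq_top [Fintype ι] [DecidableEq ι] (hφ : IsSkewHermitianForm φ)
    {e : ι → V} (he : IsOrthonormal φ e) :
    hφ.orthogonal e ⊔ Submodule.span ℍ[ℝ]ᵐᵒᵖ (Set.range e) = ⊤ := by
  refine eq_top_iff.2 fun v _ => ?_
  rw [← sub_add_cancel v (∑ j, op (-unitI * φ (e j) v) • e j)]
  exact Submodule.add_mem_sup (hφ.sub_sum_mem_orthogonal he v)
    (Submodule.sum_mem _ fun j _ => Submodule.smul_mem _ _ (Submodule.subset_span ⟨j, rfl⟩))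

theorem orthogonal_ne_bot [FiniteDimensional ℍ[ℝ]ᵐᵒᵖ V] [Fintype ι] [DecidableEq ι]
    (hφ : IsSkewHermitianForm φ) {e : ι → V} (he : IsOrthonormal φ e)
    (hcard : Fintype.card ι < Module.finrank ℍ[ℝ]ᵐᵒᵖ V) : hφ.orthogonal e ≠ ⊥ := by
  intro hbot
  have hle := Submodule.finrank_add_le_finrank_add_finrank (hφ.orthogonal e)
    (Submodule.span ℍ[ℝ]ᵐᵒᵖ (Set.range e))
  rw [hφ.orthogonal_sup_span_eq_top he, hbot, finrank_top, finrank_bot] at hle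
  have := finrank_range_le_card (R := ℍ[ℝ]ᵐᵒᵖ) e
  simp only [Set.finrank] at this
  omega

theorem exists_mem_orthogonal_apply_self_ne_zero [Fintype ι] [DecidableEq ι]
    (hφ : IsSkewHermitianForm φ) (hnd : ∀ x, (∀ y, φ x y = 0) → x = 0) {e : ι → V}
    (he : IsOrthonormal φ e) (hW : hφ.orthogonal e ≠ ⊥) :
    ∃ w ∈ hφ.orthogonal e, φ w w ≠ 0 := by
  by_contra! h
  obtain ⟨x, hx, hx0⟩ := Submodule.exists_mem_ne_zero_of_ne_bot hW
  refine hx0 (hnd x fun v => ?_)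
  have hle : hφ.orthogonal e ⊔ Submodule.span ℍ[ℝ]ᵐᵒᵖ (Set.range e) ≤
      LinearMap.ker (hφ.rightLinear x) := by
    refine sup_le (fun w hw => hφ.apply_eq_zero_of_apply_self_eq_zero h hx hw)
      (Submodule.span_le.2 ?_)
    rintro _ ⟨j, rfl⟩
    exact hφ.apply_eq_zero_comm.1 (hφ.mem_orthogonal.1 hx j)
  rw [hφ.orthogonal_sup_span_eq_top he] at hle
  exact hle Submodule.mem_top

theorem exists_mem_orthogonal_apply_self_eq_unitI [Fintype ι] [DecidableEq ι]
    (hφ : IsSkewHermitianForm φ) (hnd : ∀ x, (∀ y, φ x y = 0) → x = 0) {e : ι → V}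
    (he : IsOrthonormal φ e) (hW : hφ.orthogonal e ≠ ⊥) :
    ∃ w ∈ hφ.orthogonal e, φ w w = unitI := by
  obtain ⟨w, hw, hw0⟩ := hφ.exists_mem_orthogonal_apply_self_ne_zero hnd he hW
  obtain ⟨a, ha⟩ := exists_star_mul_mul_eq_unitI (hφ.re_apply_self w) hw0
  exact ⟨op a • w, Submodule.smul_mem _ _ hw, by rw [hφ.smul_left, hφ.smul_right, ← mul_assoc, ha]⟩

theorem IsOrthonormal.snoc (hφ : IsSkewHermitianForm φ) {k : ℕ} {e : Fin k → V}
    (he : IsOrthonormal φ e) {w : V} (hw : w ∈ hφ.orthogonal e) (hww : φ w w = unitI) :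
    IsOrthonormal φ (Fin.snoc e w : Fin (k + 1) → V) := by
  have hew : ∀ j, φ (e j) w = 0 := hφ.mem_orthogonal.1 hw
  have hwe : ∀ j, φ w (e j) = 0 := fun j => hφ.apply_eq_zero_comm.1 (hew j)
  intro i j
  induction i using Fin.lastCases <;> induction j using Fin.lastCases <;>
    simp [hww, hew, hwe, he _ _, Fin.castSucc_ne_last, (Fin.castSucc_ne_last _).symm]

theorem exists_isOrthonormal_fin [FiniteDimensional ℍ[ℝ]ᵐᵒᵖ V] (hφ : IsSkewHermitianForm φ)
    (hnd : ∀ x, (∀ y, φ x y = 0) → x = 0) :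
    ∀ k ≤ Module.finrank ℍ[ℝ]ᵐᵒᵖ V, ∃ e : Fin k → V, IsOrthonormal φ e
  | 0, _ => ⟨Fin.elim0, fun i => i.elim0⟩
  | k + 1, hk => by
    obtain ⟨e, he⟩ := exists_isOrthonormal_fin hφ hnd k (by omega)
    obtain ⟨w, hw, hww⟩ := hφ.exists_mem_orthogonal_apply_self_eq_unitI hnd he
      (hφ.orthogonal_ne_bot he (by simpa using hk))
    exact ⟨_, he.snoc hφ hw hww⟩

theorem exists_basis_isOrthonormal [FiniteDimensional ℍ[ℝ]ᵐᵒᵖ V] (hφ : IsSkewHermitianForm φ)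
    (hnd : ∀ x, (∀ y, φ x y = 0) → x = 0) :
    ∃ b : Module.Basis (Fin (Module.finrank ℍ[ℝ]ᵐᵒᵖ V)) ℍ[ℝ]ᵐᵒᵖ V, IsOrthonormal φ b := by
  obtain ⟨e, he⟩ := hφ.exists_isOrthonormal_fin hnd _ le_rfl
  refine ⟨basisOfLinearIndependentOfCardEqFinrank' e (he.linearIndependent hφ) (by simp), ?_⟩
  rwa [coe_basisOfLinearIndependentOfCardEqFinrank']

theorem comp (hφ : IsSkewHermitianForm φ) {V' : Type*} [AddCommGroup V'] [Module ℍ[ℝ]ᵐᵒᵖ V']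
    (F : V' →ₗ[ℍ[ℝ]ᵐᵒᵖ] V) : IsSkewHermitianForm fun x y => φ (F x) (F y) where
  add_left x x' y := by simp only [map_add, hφ.add_left]
  add_right x y y' := by simp only [map_add, hφ.add_right]
  smul_left a x y := by simp only [map_smul, hφ.smul_left]
  smul_right a x y := by simp only [map_smul, hφ.smul_right]
  skew x y := hφ.skew (F x) (F y)

theorem ext_basis {ψ : V → V → ℍ[ℝ]} (hφ : IsSkewHermitianForm φ) (hψ : IsSkewHermitianForm ψ)
    (b : Module.Basis ι ℍ[ℝ]ᵐᵒᵖ V) (h : ∀ i j, φ (b i) (b j) = ψ (b i) (b j)) (x y : V) :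
    φ x y = ψ x y := by
  have right (x : V) (hx : ∀ j, φ x (b j) = ψ x (b j)) (y : V) : φ x y = ψ x y :=
    LinearMap.congr_fun (b.ext (f₁ := hφ.rightLinear x) (f₂ := hψ.rightLinear x) hx) y
  refine right x (fun j => ?_) y
  rw [hφ.skew (b j) x, hψ.skew (b j) x, right (b j) (h j)]

theorem exists_linearEquiv_forall_eq_comp [FiniteDimensional ℍ[ℝ]ᵐᵒᵖ V] {ψ : V → V → ℍ[ℝ]}
    (hφ : IsSkewHermitianForm φ) (hψ : IsSkewHermitianForm ψ)
    (hφnd : ∀ x, (∀ y, φ x y = 0) → x = 0) (hψnd : ∀ x, (∀ y, ψ x y = 0) → x = 0) :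
    ∃ F : V ≃ₗ[ℍ[ℝ]ᵐᵒᵖ] V, ∀ x y, ψ x y = φ (F x) (F y) := by
  obtain ⟨bφ, hbφ⟩ := hφ.exists_basis_isOrthonormal hφnd
  obtain ⟨bψ, hbψ⟩ := hψ.exists_basis_isOrthonormal hψnd
  refine ⟨bψ.equiv bφ (Equiv.refl _), hψ.ext_basis (hφ.comp _) bψ fun i j => ?_⟩
  simp [hbφ i j, hbψ i j]

end IsSkewHermitianForm

/-- Quaternionic law of inertia for skew-Hermitian forms: any two nondegenerate skew-Hermitian
forms on the right quaternionic vector space `ℍⁿ` are equivalent via an invertible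
quaternionic-linear change of basis.  Right scalar multiplication is written componentwise. -/
theorem stmt_19 (n : ℕ)
    (φ ψ : (Fin n → ℍ[ℝ]) → (Fin n → ℍ[ℝ]) → ℍ[ℝ])
    -- φ is additive in both variables, conjugate-linear in the first and
    -- ℍ-linear in the second (for the right module structure), skew-Hermitian, nondegenerate
    (hφadd₁ : ∀ x x' y, φ (x + x') y = φ x y + φ x' y)
    (hφadd₂ : ∀ x y y', φ x (y + y') = φ x y + φ x y')
    (hφsmul₁ : ∀ (a : ℍ[ℝ]) x y, φ (fun i => x i * a) y = star a * φ x y)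
    (hφsmul₂ : ∀ (a : ℍ[ℝ]) x y, φ x (fun i => y i * a) = φ x y * a)
    (hφskew : ∀ x y, φ y x = -star (φ x y))
    (hφnd : ∀ x, (∀ y, φ x y = 0) → x = 0)
    -- and likewise for ψ
    (hψadd₁ : ∀ x x' y, ψ (x + x') y = ψ x y + ψ x' y)
    (hψadd₂ : ∀ x y y', ψ x (y + y') = ψ x y + ψ x y')
    (hψsmul₁ : ∀ (a : ℍ[ℝ]) x y, ψ (fun i => x i * a) y = star a * ψ x y)
    (hψsmul₂ : ∀ (a : ℍ[ℝ]) x y, ψ x (fun i => y i * a) = ψ x y * a)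
    (hψskew : ∀ x y, ψ y x = -star (ψ x y))
    (hψnd : ∀ x, (∀ y, ψ x y = 0) → x = 0) :
    ∃ f : (Fin n → ℍ[ℝ]) → (Fin n → ℍ[ℝ]),
      Function.Bijective f ∧
      (∀ x y, f (x + y) = f x + f y) ∧
      (∀ (a : ℍ[ℝ]) x, f (fun i => x i * a) = fun i => f x i * a) ∧
      ∀ x y, ψ x y = φ (f x) (f y) := by
  obtain ⟨F, hF⟩ := IsSkewHermitianForm.exists_linearEquiv_forall_eq_comp
    ⟨hφadd₁, hφadd₂, hφsmul₁, hφsmul₂, hφskew⟩ ⟨hψadd₁, hψadd₂, hψsmul₁, hψsmul₂, hψskew⟩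
    hφnd hψnd
  exact ⟨F, F.bijective, map_add F, fun a x => map_smul F (op a) x, hF⟩
end
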